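/- A random variable X on (Ω,𝓕,P) belongs to 𝓛_Q if and only if ∫_{(0,∞)} (1 − D(F_X(x))) dλ(x) < ∞, where λ is Lebesgue measure; that is, 𝓛_Q = {X | ∫_{(0,∞)} (1 − D(F_X(x))) dλ(x) < ∞}. -/

import Mathlib

open MeasureTheory

/-- The distribution function `F_X(x) = P[X ≤ x]` of a random variable `X`. -/
noncomputable def distFun {Ω : Type*} [MeasurableSpace Ω] (P : Measure Ω) (X : Ω → ℝ) (x : ℝ) : ℝ :=
  (P {ω | X ω ≤ x}).toReal

/-- The (lower) quantile function `F^←_X(u) = inf {x | F_X(x) ≥ u}`. -/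
noncomputable def quantile {Ω : Type*} [MeasurableSpace Ω] (P : Measure Ω) (X : Ω → ℝ) (u : ℝ) : ℝ :=
  sInf {x : ℝ | u ≤ distFun P X x}

/-- A distortion function: an increasing, right-continuous `D : [0,1] → [0,1]`
with `D 0 = 0` and `sup_{u ∈ (0,1)} D u = 1`. -/
structure IsDistortion (D : ℝ → ℝ) : Prop where
  mapsTo : ∀ u ∈ Set.Icc (0:ℝ) 1, D u ∈ Set.Icc (0:ℝ) 1
  mono : ∀ ⦃a b : ℝ⦄, 0 ≤ a → a ≤ b → b ≤ 1 → D a ≤ D b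
  rightCont : ∀ u ∈ Set.Ico (0:ℝ) 1, ContinuousWithinAt D (Set.Icc u 1) u
  zero : D 0 = 0
  sup_one : sSup (D '' Set.Ioo 0 1) = 1

/-- `Q` is the probability measure on the Borel sets of `(0,1)` corresponding to
the distortion function `D`, i.e. `Q (a,b] = D b - D a` for `0 < a ≤ b < 1`. -/
def IsCorresponding (D : ℝ → ℝ) (Q : Measure ℝ) : Prop :=
  IsProbabilityMeasure Q ∧ Q (Set.Ioo (0:ℝ) 1) = 1 ∧
    ∀ a b : ℝ, 0 < a → a ≤ b → b < 1 → Q (Set.Ioc a b) = ENNReal.ofReal (D b - D a)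

/-- `X ∈ 𝓛_Q`, i.e. `∫_{(0,1)} (F^←_X(u))⁺ dQ(u) < ∞`. -/
def memLQ {Ω : Type*} [MeasurableSpace Ω] (P : Measure Ω) (Q : Measure ℝ) (X : Ω → ℝ) : Prop :=
  ∫⁻ u in Set.Ioo (0:ℝ) 1, ENNReal.ofReal (max (quantile P X u) 0) ∂Q < ⊤

/-- The quantile risk measure
`ϱ_Q[X] = ∫_{(0,1)} (F^←_X(u))⁺ dQ(u) - ∫_{(0,1)} (F^←_X(u))⁻ dQ(u)`, with values in `EReal`. -/
noncomputable def rho {Ω : Type*} [MeasurableSpace Ω] (P : Measure Ω) (Q : Measure ℝ)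
    (X : Ω → ℝ) : EReal :=
  ((∫⁻ u in Set.Ioo (0:ℝ) 1, ENNReal.ofReal (max (quantile P X u) 0) ∂Q) : EReal)
    - ((∫⁻ u in Set.Ioo (0:ℝ) 1, ENNReal.ofReal (max (-(quantile P X u)) 0) ∂Q) : EReal)

/-!
By the layer-cake formula, `∫ (F^←_X)⁺ dQ = ∫_{(0,∞)} Q{u ∈ (0,1) | F^←_X(u) > t} dt`. Right
continuity of `F_X` gives the Galois connection `F^←_X(u) ≤ t ↔ u ≤ F_X(t)`, so the level set is
`(F_X(t), 1)`. Finally `D` is the distribution function of `Q` on `[0,1)`, whence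
`Q (c, 1) = 1 - D(c)`.
-/

open Set Filter Topology ProbabilityTheory

theorem StieltjesFunction.csInf_setOf_le_le_iff (F : StieltjesFunction ℝ) {u x : ℝ}
    (hne : {y | u ≤ F y}.Nonempty) (hbdd : BddBelow {y | u ≤ F y}) :
    sInf {y | u ≤ F y} ≤ x ↔ u ≤ F x := by
  refine ⟨fun h => ?_, fun h => csInf_le hbdd h⟩
  have hmem : u ≤ F (sInf {y | u ≤ F y}) := by
    refine ge_of_tendsto ((F.right_continuous _).mono Ioi_subset_Ici_self) ?_
    filter_upwards [self_mem_nhdsWithin] with y hy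
    obtain ⟨z, hz, hzy⟩ := exists_lt_of_csInf_lt hne hy
    exact hz.trans (F.mono hzy.le)
  exact hmem.trans (F.mono h)

theorem ProbabilityTheory.csInf_setOf_le_cdf_le_iff (μ : Measure ℝ) {u x : ℝ} (hu : u ∈ Ioo 0 1) :
    sInf {y | u ≤ cdf μ y} ≤ x ↔ u ≤ cdf μ x := by
  refine (cdf μ).csInf_setOf_le_le_iff ?_ ?_
  · obtain ⟨y, hy⟩ := ((tendsto_cdf_atTop μ).eventually (eventually_gt_nhds hu.2)).exists
    exact ⟨y, hy.le⟩
  · obtain ⟨y₀, hy₀⟩ := ((tendsto_cdf_atBot μ).eventually (eventually_lt_nhds hu.1)).exists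
    exact ⟨y₀, fun y hy => le_of_not_gt fun hlt => (hy₀.trans_le hy).not_ge (monotone_cdf μ hlt.le)⟩

section DistFun

variable {Ω : Type*} [MeasurableSpace Ω] (P : Measure Ω) [IsProbabilityMeasure P] {X : Ω → ℝ}

theorem distFun_mem_Icc (X : Ω → ℝ) (x : ℝ) : distFun P X x ∈ Icc 0 1 :=
  ⟨ENNReal.toReal_nonneg, measureReal_le_one⟩

theorem distFun_eq_cdf_map (hX : Measurable X) : distFun P X = cdf (P.map X) := by
  have := Measure.isProbabilityMeasure_map (μ := P) hX.aemeasurable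
  ext x
  rw [cdf_eq_real, map_measureReal_apply hX measurableSet_Iic]
  rfl

theorem quantile_le_iff (hX : Measurable X) {u x : ℝ} (hu : u ∈ Ioo 0 1) :
    quantile P X u ≤ x ↔ u ≤ distFun P X x := by
  rw [quantile, distFun_eq_cdf_map P hX]
  exact csInf_setOf_le_cdf_le_iff _ hu

theorem quantile_monotoneOn (hX : Measurable X) : MonotoneOn (quantile P X) (Ioo 0 1) :=
  fun _ hu _ hv huv => (quantile_le_iff P hX hu).2 (huv.trans ((quantile_le_iff P hX hv).1 le_rfl))

theorem lt_quantile_iff (hX : Measurable X) {u t : ℝ} (hu : u ∈ Ioo 0 1) :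
    t < quantile P X u ↔ distFun P X t < u := by
  simpa only [not_le] using (quantile_le_iff P hX hu).not

theorem setOf_lt_max_quantile_zero_inter_Ioo (hX : Measurable X) {t : ℝ} (ht : 0 ≤ t) :
    {u | t < max (quantile P X u) 0} ∩ Ioo 0 1 = Ioo (distFun P X t) 1 := by
  ext u
  simp only [mem_inter_iff, mem_ofPred_eq, lt_max_iff, ht.not_gt, or_false]
  constructor
  · rintro ⟨hq, hu⟩
    exact ⟨(lt_quantile_iff P hX hu).1 hq, hu.2⟩
  · rintro ⟨hFu, hu1⟩
    have hu : u ∈ Ioo 0 1 := ⟨(distFun_mem_Icc P X t).1.trans_lt hFu, hu1⟩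
    exact ⟨(lt_quantile_iff P hX hu).2 hFu, hu⟩

end DistFun

section Distortion

variable {D : ℝ → ℝ} {Q : Measure ℝ}

theorem IsDistortion.apply_one (hD : IsDistortion D) : D 1 = 1 := by
  refine le_antisymm (hD.mapsTo 1 ⟨zero_le_one, le_rfl⟩).2 ?_
  have h : sSup (D '' Ioo 0 1) ≤ D 1 := by
    refine csSup_le ((nonempty_Ioo.2 one_pos).image D) ?_
    rintro _ ⟨u, hu, rfl⟩
    exact hD.mono hu.1.le hu.2.le le_rfl
  rwa [hD.sup_one] at h

theorem IsCorresponding.cdf_eqOn (hD : IsDistortion D) (hQ : IsCorresponding D Q) :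
    EqOn (cdf Q) D (Ico 0 1) := by
  intro c hc
  have := hQ.1
  have hQ0 : cdf Q 0 = 0 := by
    rw [cdf_eq_real, measureReal_eq_zero_iff]
    exact measure_mono_null (show Iic (0:ℝ) ⊆ (Ioo 0 1)ᶜ from fun x hx hx' => hx'.1.not_ge hx)
      ((prob_compl_eq_zero_iff measurableSet_Ioo).2 hQ.2.1)
  rcases hc.1.eq_or_lt with rfl | hc0
  · rw [hQ0, hD.zero]
  -- `cdf Q - D` is constant on `(0, c]` and tends to `cdf Q 0 - D 0 = 0` at `0+`
  have hconst : ∀ a ∈ Ioc 0 c, cdf Q c - D c = cdf Q a - D a := by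
    intro a ha
    have h := hQ.2.2 a c ha.1 ha.2 hc.2
    rw [← measure_cdf (μ := Q), (cdf Q).measure_Ioc] at h
    have := (ENNReal.ofReal_eq_ofReal_iff (sub_nonneg.2 (monotone_cdf Q ha.2))
      (sub_nonneg.2 (hD.mono ha.1.le ha.2 hc.2.le))).1 h
    linarith
  have hcdf : Tendsto (cdf Q) (𝓝[>] 0) (𝓝 (cdf Q 0)) :=
    ((cdf Q).right_continuous 0).mono Ioi_subset_Ici_self
  have hD0 : Tendsto D (𝓝[>] 0) (𝓝 (D 0)) := by
    have := (hD.rightCont 0 ⟨le_rfl, one_pos⟩).mono Ioo_subset_Icc_self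
    rwa [ContinuousWithinAt, nhdsWithin_Ioo_eq_nhdsGT one_pos] at this
  have hlim := tendsto_nhds_unique
    (tendsto_const_nhds.congr' (eventually_of_mem (Ioc_mem_nhdsGT hc0) hconst)) (hcdf.sub hD0)
  rw [hQ0, hD.zero] at hlim
  linarith

theorem IsCorresponding.measure_Ioo (hD : IsDistortion D) (hQ : IsCorresponding D Q) {c : ℝ}
    (hc : c ∈ Icc 0 1) : Q (Ioo c 1) = ENNReal.ofReal (1 - D c) := by
  have := hQ.1
  rcases hc.2.eq_or_lt with rfl | hc1
  · simp [hD.apply_one]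
  have hIoc : Q (Ioc 0 c) = ENNReal.ofReal (D c) := by
    rw [← measure_cdf (μ := Q), (cdf Q).measure_Ioc, hQ.cdf_eqOn hD ⟨hc.1, hc1⟩,
      hQ.cdf_eqOn hD ⟨le_rfl, one_pos⟩, hD.zero, sub_zero]
  have hsplit : Ioo c 1 = Ioo 0 1 \ Ioc 0 c := by
    ext x
    simp only [mem_Ioo, Set.mem_sdiff, mem_Ioc, not_and, not_le]
    grind
  rw [hsplit, measure_sdiff (Ioc_subset_Ioo_right hc1) measurableSet_Ioc.nullMeasurableSet
    (hIoc ▸ ENNReal.ofReal_ne_top), hQ.2.1, hIoc, ← ENNReal.ofReal_one,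
    ← ENNReal.ofReal_sub _ (hD.mapsTo c hc).1]

end Distortion

/-- `X ∈ 𝓛_Q` if and only if `∫_{(0,∞)} (1 - D(F_X(x))) dλ(x) < ∞`. -/
theorem memLQ_iff_lintegral_one_sub_distortion_lt_top {Ω : Type*} [MeasurableSpace Ω]
    (P : Measure Ω) [IsProbabilityMeasure P] (D : ℝ → ℝ) (Q : Measure ℝ)
    (hD : IsDistortion D) (hQ : IsCorresponding D Q)
    (X : Ω → ℝ) (hX : Measurable X) :
    memLQ P Q X ↔ ∫⁻ x in Set.Ioi (0:ℝ), ENNReal.ofReal (1 - D (distFun P X x)) < ⊤ := by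
  have hmono : MonotoneOn (fun u => max (quantile P X u) 0) (Ioo 0 1) :=
    fun u hu v hv huv => max_le_max_right 0 (quantile_monotoneOn P hX hu hv huv)
  have hlevel : ∀ t ∈ Ioi (0:ℝ), Q.restrict (Ioo 0 1) {u | t < max (quantile P X u) 0}
      = ENNReal.ofReal (1 - D (distFun P X t)) := fun t ht => by
    rw [Measure.restrict_apply' measurableSet_Ioo,
      setOf_lt_max_quantile_zero_inter_Ioo P hX ht.out.le,
      hQ.measure_Ioo hD (distFun_mem_Icc P X t)]
  rw [memLQ, lintegral_eq_lintegral_meas_lt _ (ae_of_all _ fun u => le_max_right _ 0)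
    (aemeasurable_restrict_of_monotoneOn measurableSet_Ioo hmono),
    setLIntegral_congr_fun measurableSet_Ioi hlevel]
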